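/- Let x, y ∈ {0,1}^n with f_m(x) ≠ f_m(y) for some m ∈ {1,2}, and let m̄ = 3−m be the other objective. If b is minimal such that f_m^B(x_{B_b}) ≠ f_m^B(y_{B_b}), then f_{m̄}^B(x_{B_b}) ≠ f_{m̄}^B(y_{B_b}), and b is also minimal with respect to the property f_{m̄}^B(x_{B_b}) ≠ f_{m̄}^B(y_{B_b}). -/

import Mathlib

/-- Number of leading positions on which `x` agrees with the target string `z`. -/
def LO (ℓ : ℕ) (z x : Fin ℓ → Bool) : ℕ :=
  (Finset.univ.filter (fun i : Fin ℓ => ∀ j ≤ i, x j = z j)).card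

/-- The all-ones target string `z¹ = 1^ℓ`. -/
def zOne (ℓ : ℕ) : Fin ℓ → Bool := fun _ => true

/-- The target string `z² = 1^{ℓ-r} 0^r`. -/
def zTwo (ℓ r : ℕ) : Fin ℓ → Bool := fun i => decide (i.val < ℓ - r)

/-- The first base function `f₁^B(w) = (ℓ+1)·LO_{z¹}(w) + LO_{z²}(w)`. -/
def f1B (ℓ r : ℕ) (w : Fin ℓ → Bool) : ℕ :=
  (ℓ + 1) * LO ℓ (zOne ℓ) w + LO ℓ (zTwo ℓ r) w

/-- The second base function `f₂^B(w) = (ℓ+1)·LO_{z²}(w) + LO_{z¹}(w)`. -/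
def f2B (ℓ r : ℕ) (w : Fin ℓ → Bool) : ℕ :=
  (ℓ + 1) * LO ℓ (zTwo ℓ r) w + LO ℓ (zOne ℓ) w

/-- The base functions indexed by `m : Fin 2` (`0` for `f₁^B`, `1` for `f₂^B`). -/
def fB (ℓ r : ℕ) (m : Fin 2) : (Fin ℓ → Bool) → ℕ :=
  if m = 0 then f1B ℓ r else f2B ℓ r

/-- The `b`-th block (0-based) of a bitstring of length `n = k·ℓ`. -/
def blockOf (k ℓ : ℕ) (x : Fin (k * ℓ) → Bool) (b : Fin k) : Fin ℓ → Bool :=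
  fun j => x ⟨b.val * ℓ + j.val, by
    calc b.val * ℓ + j.val < b.val * ℓ + ℓ := Nat.add_lt_add_left j.isLt _
      _ = (b.val + 1) * ℓ := by ring
      _ ≤ k * ℓ := Nat.mul_le_mul_right ℓ b.isLt⟩

/-- The full objective `f_m(x) = Σ_b (ℓ+1)^{2(k-b)} f_m^B(x_{B_b})` (with 0-based
block index `b`, so the paper's exponent `2(k-b)` becomes `2(k-1-b)`). -/
def fObj (k ℓ r : ℕ) (m : Fin 2) (x : Fin (k * ℓ) → Bool) : ℕ :=
  ∑ b : Fin k, (ℓ + 1) ^ (2 * (k - 1 - b.val)) * fB ℓ r m (blockOf k ℓ x b)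

/-!
Both block functions `f₁^B` and `f₂^B` write the pair `(LO_{z¹}(w), LO_{z²}(w))` as a
two-digit number in base `ℓ + 1`, only with the digits in opposite order. Since both leading
counts are at most `ℓ`, this encoding is injective, so `f₁^B` and `f₂^B` have the same level
sets: on every block, `x` and `y` tie under one objective exactly when they tie under the other.
-/

lemma LO_le (ℓ : ℕ) (z x : Fin ℓ → Bool) : LO ℓ z x ≤ ℓ :=
  (Finset.card_filter_le _ _).trans_eq (Finset.card_fin ℓ)

lemma Nat.mul_add_eq_mul_add_iff {d a c a' c' : ℕ} (hc : c < d) (hc' : c' < d) :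
    d * a + c = d * a' + c' ↔ a = a' ∧ c = c' := by
  constructor
  · intro h
    have hd : 0 < d := by omega
    have hdiv := congrArg (· / d) h
    have hmod := congrArg (· % d) h
    simp only [Nat.mul_add_div hd, Nat.div_eq_of_lt hc, Nat.div_eq_of_lt hc',
      Nat.mul_add_mod, Nat.mod_eq_of_lt hc, Nat.mod_eq_of_lt hc'] at hdiv hmod
    exact ⟨by simpa using hdiv, hmod⟩
  · rintro ⟨rfl, rfl⟩
    rfl

lemma f1B_eq_iff (ℓ r : ℕ) (u v : Fin ℓ → Bool) :
    f1B ℓ r u = f1B ℓ r v ↔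
      LO ℓ (zOne ℓ) u = LO ℓ (zOne ℓ) v ∧ LO ℓ (zTwo ℓ r) u = LO ℓ (zTwo ℓ r) v :=
  Nat.mul_add_eq_mul_add_iff (Nat.lt_succ_of_le (LO_le _ _ _)) (Nat.lt_succ_of_le (LO_le _ _ _))

lemma f2B_eq_iff (ℓ r : ℕ) (u v : Fin ℓ → Bool) :
    f2B ℓ r u = f2B ℓ r v ↔
      LO ℓ (zOne ℓ) u = LO ℓ (zOne ℓ) v ∧ LO ℓ (zTwo ℓ r) u = LO ℓ (zTwo ℓ r) v :=
  (Nat.mul_add_eq_mul_add_iff (Nat.lt_succ_of_le (LO_le _ _ _))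
    (Nat.lt_succ_of_le (LO_le _ _ _))).trans and_comm

lemma fB_eq_iff (ℓ r : ℕ) (m : Fin 2) (u v : Fin ℓ → Bool) :
    fB ℓ r m u = fB ℓ r m v ↔
      LO ℓ (zOne ℓ) u = LO ℓ (zOne ℓ) v ∧ LO ℓ (zTwo ℓ r) u = LO ℓ (zTwo ℓ r) v := by
  unfold fB
  split_ifs
  · exact f1B_eq_iff ℓ r u v
  · exact f2B_eq_iff ℓ r u v

lemma fB_eq_iff_fB_eq (ℓ r : ℕ) (m m' : Fin 2) (u v : Fin ℓ → Bool) :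
    fB ℓ r m u = fB ℓ r m v ↔ fB ℓ r m' u = fB ℓ r m' v :=
  (fB_eq_iff ℓ r m u v).trans (fB_eq_iff ℓ r m' u v).symm

theorem stmt_8_general (k ℓ r : ℕ)
    (x y : Fin (k * ℓ) → Bool) (m : Fin 2)
    (b : Fin k)
    (hb : fB ℓ r m (blockOf k ℓ x b) ≠ fB ℓ r m (blockOf k ℓ y b))
    (hbmin : ∀ c : Fin k, c < b → fB ℓ r m (blockOf k ℓ x c) = fB ℓ r m (blockOf k ℓ y c)) :
    ∀ mbar : Fin 2, mbar ≠ m →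
      fB ℓ r mbar (blockOf k ℓ x b) ≠ fB ℓ r mbar (blockOf k ℓ y b) ∧
      (∀ c : Fin k, c < b →
        fB ℓ r mbar (blockOf k ℓ x c) = fB ℓ r mbar (blockOf k ℓ y c)) := fun mbar _ =>
  ⟨fun h => hb ((fB_eq_iff_fB_eq ℓ r m mbar _ _).mpr h),
    fun c hc => (fB_eq_iff_fB_eq ℓ r m mbar _ _).mp (hbmin c hc)⟩

/-- If `f_m(x) ≠ f_m(y)` and `b` is minimal with
`f_m^B(x_{B_b}) ≠ f_m^B(y_{B_b})`, then for the other objective `m̄ ≠ m` we also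
have `f_{m̄}^B(x_{B_b}) ≠ f_{m̄}^B(y_{B_b})`, and `b` is minimal with this
property as well. -/
theorem stmt_8 (k ℓ r : ℕ) (hk : 0 < k) (hℓ : 0 < ℓ) (hr : r ≤ ℓ)
    (x y : Fin (k * ℓ) → Bool) (m : Fin 2)
    (hne : fObj k ℓ r m x ≠ fObj k ℓ r m y)
    (b : Fin k)
    (hb : fB ℓ r m (blockOf k ℓ x b) ≠ fB ℓ r m (blockOf k ℓ y b))
    (hbmin : ∀ c : Fin k, c < b → fB ℓ r m (blockOf k ℓ x c) = fB ℓ r m (blockOf k ℓ y c)) :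
    ∀ mbar : Fin 2, mbar ≠ m →
      fB ℓ r mbar (blockOf k ℓ x b) ≠ fB ℓ r mbar (blockOf k ℓ y b) ∧
      (∀ c : Fin k, c < b →
        fB ℓ r mbar (blockOf k ℓ x c) = fB ℓ r mbar (blockOf k ℓ y c)) :=
  stmt_8_general k ℓ r x y m b hb hbmin
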